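/- Consider a homogeneous BNPG on the complete graph with n players and fix k with 0 < k < n such that Δg(k) ≤ Δg(k−1) and such that some k-PSNE exists. Let I×(k) = {i : c_i ≤ Δg(k−1)}, and let S ⊆ I×(k) be a set of k players of I×(k) with the k smallest costs. Then the profile investing exactly on S is a k-PSNE, and its social welfare SW(x) = Σ_i U_i(x) is at least the social welfare of every k-PSNE. -/

import Mathlib

/-- Finite difference `Δg(m) = g(m+1) − g(m)`. -/
def Δg (g : ℕ → ℝ) (m : ℕ) : ℝ := g (m + 1) - g m

/-- Number of investing neighbors of player `i` under profile `x` in graph `G`. -/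
noncomputable def nInv {V : Type*} (G : SimpleGraph V) (x : V → Bool) (i : V) : ℕ :=
  {j | G.Adj i j ∧ x j = true}.ncard

/-- Pure-strategy Nash equilibrium of the BNPG on `G` with externalities `g` and costs `c`. -/
def IsPSNE {V : Type*} (G : SimpleGraph V) (g : V → ℕ → ℝ) (c : V → ℝ)
    (x : V → Bool) : Prop :=
  ∀ i, (x i = true → c i ≤ Δg (g i) (nInv G x i)) ∧
       (x i = false → Δg (g i) (nInv G x i) ≤ c i)


/-- Social welfare: the sum of all players' utilities. -/
noncomputable def SW {V : Type*} [Fintype V] (G : SimpleGraph V) (g : V → ℕ → ℝ)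
    (c : V → ℝ) (x : V → Bool) : ℝ :=
  ∑ i, (g i ((if x i then 1 else 0) + nInv G x i) - c i * (if x i then 1 else 0))

/-!
On the complete graph with a common externality `g`, every player sees the same number of
investors, so a profile with `k` investors is an equilibrium exactly when every investor has cost
at most `Δg(k-1)` and every non-investor cost at least `Δg(k)`, and its welfare is `n·g(k)` minus
the investors' total cost. Among `k`-PSNE, whose investors all lie in `I×(k)`, the `k` cheapest
players of `I×(k)` therefore give the largest welfare.
-/

open Finset

theorem Finset.sum_le_sum_of_card_eq {ι M : Type*} [DecidableEq ι] [AddCommMonoid M]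
    [PartialOrder M] [IsOrderedAddMonoid M] {S T : Finset ι} (f : ι → M) (hcard : #S = #T)
    (hle : ∀ i ∈ S \ T, ∀ j ∈ T \ S, f i ≤ f j) :
    ∑ i ∈ S, f i ≤ ∑ i ∈ T, f i := by
  have e : (S \ T : Finset ι) ≃ (T \ S : Finset ι) :=
    Fintype.equivOfCardEq (by simpa using card_sdiff_comm hcard)
  have hsdiff : ∑ i ∈ S \ T, f i ≤ ∑ i ∈ T \ S, f i := by
    rw [← sum_coe_sort (S \ T), ← sum_coe_sort (T \ S), ← e.sum_comp]
    exact sum_le_sum fun i _ => hle i i.2 (e i) (e i).2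
  rw [← sum_inter_add_sum_sdiff S T, ← sum_inter_add_sum_sdiff T S, inter_comm T S]
  gcongr

section CompleteGraph

variable {V : Type*}

theorem nInv_top_eq (x : V → Bool) (i : V) :
    nInv ⊤ x i = ({j | x j = true} \ {i} : Set V).ncard := by
  unfold nInv
  congr 1
  ext j
  simp only [SimpleGraph.top_adj, Set.mem_ofPred_eq, Set.mem_sdiff, Set.mem_singleton_iff]
  exact ⟨fun ⟨hij, hj⟩ => ⟨hj, hij.symm⟩, fun ⟨hj, hji⟩ => ⟨Ne.symm hji, hj⟩⟩

variable [Fintype V]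

def investors (x : V → Bool) : Finset V := {i | x i = true}

theorem ncard_setOf_eq_card_investors (x : V → Bool) :
    {i | x i = true}.ncard = #(investors x) := by
  rw [← Set.ncard_coe_finset]
  simp [investors]

@[simp]
theorem investors_decide_mem [DecidableEq V] (S : Finset V) :
    investors (fun i => decide (i ∈ S)) = S := by
  ext i
  simp [investors]

theorem nInv_top_add_one {x : V → Bool} {i : V} (hi : x i = true) :
    nInv ⊤ x i + 1 = #(investors x) := by
  rw [nInv_top_eq, Set.ncard_sdiff_singleton_add_one (s := {j | x j = true}) hi,
    ncard_setOf_eq_card_investors]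

theorem nInv_top_of_false {x : V → Bool} {i : V} (hi : x i = false) :
    nInv ⊤ x i = #(investors x) := by
  rw [nInv_top_eq, Set.sdiff_singleton_eq_self (by simp [hi]), ncard_setOf_eq_card_investors]

theorem isPSNE_top_iff (g : ℕ → ℝ) (c : V → ℝ) {x : V → Bool} {k : ℕ}
    (hk : #(investors x) = k) :
    IsPSNE ⊤ (fun _ => g) c x ↔
      (∀ i ∈ investors x, c i ≤ Δg g (k - 1)) ∧ (∀ i ∉ investors x, Δg g k ≤ c i) := by
  have hin {i} (hi : x i = true) : nInv ⊤ x i = k - 1 := by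
    have := nInv_top_add_one hi; omega
  have hout {i} (hi : x i = false) : nInv ⊤ x i = k := (nInv_top_of_false hi).trans hk
  simp only [IsPSNE, investors, mem_filter, mem_univ, true_and, Bool.not_eq_true]
  constructor
  · intro h
    exact ⟨fun i hi => hin hi ▸ (h i).1 hi, fun i hi => hout hi ▸ (h i).2 hi⟩
  · rintro ⟨hinv, hnot⟩ i
    exact ⟨fun hi => (hin hi).symm ▸ hinv i hi, fun hi => (hout hi).symm ▸ hnot i hi⟩

theorem SW_top (g : ℕ → ℝ) (c : V → ℝ) (x : V → Bool) :
    SW ⊤ (fun _ => g) c x = Fintype.card V * g #(investors x) - ∑ i ∈ investors x, c i := by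
  have hterm (i : V) : (if x i then 1 else 0) + nInv ⊤ x i = #(investors x) := by
    cases hi : x i
    · simpa using nInv_top_of_false hi
    · simpa [add_comm] using nInv_top_add_one hi
  simp only [SW, hterm, sum_sub_distrib, sum_const, card_univ, nsmul_eq_mul, mul_ite, mul_one,
    mul_zero, ← sum_filter]
  rfl

theorem isPSNE_top_of_cheapest [DecidableEq V] {g : ℕ → ℝ} {c : V → ℝ} {k : ℕ}
    (hΔ : Δg g k ≤ Δg g (k - 1)) {y : V → Bool} (hy : IsPSNE ⊤ (fun _ => g) c y)
    (hyk : #(investors y) = k) {S : Finset V} (hScard : #S = k)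
    (hSsub : ∀ i ∈ S, c i ≤ Δg g (k - 1))
    (hSmin : ∀ i ∈ S, ∀ j, c j ≤ Δg g (k - 1) → j ∉ S → c i ≤ c j) :
    IsPSNE ⊤ (fun _ => g) c (fun i => decide (i ∈ S)) := by
  obtain ⟨-, hyout⟩ := (isPSNE_top_iff g c hyk).1 hy
  refine (isPSNE_top_iff g c (by simpa using hScard)).2 ⟨by simpa using hSsub, ?_⟩
  intro i hiS
  rw [investors_decide_mem] at hiS
  by_cases hc : c i ≤ Δg g (k - 1)
  · by_cases hiy : i ∈ investors y
    · -- `S` and the investors of `y` have the same size, so `i ∈ investors y \ S` is matched by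
      -- some `j ∈ S \ investors y`, which is cheaper than `i` yet stays out in equilibrium `y`.
      obtain ⟨j, hj⟩ : (S \ investors y).Nonempty := by
        rw [← card_pos, card_sdiff_comm (hScard.trans hyk.symm), card_pos]
        exact ⟨i, mem_sdiff.2 ⟨hiy, hiS⟩⟩
      obtain ⟨hjS, hjy⟩ := mem_sdiff.1 hj
      exact (hyout j hjy).trans (hSmin j hjS i hc hiS)
    · exact hyout i hiy
  · exact hΔ.trans (not_le.1 hc).le

theorem SW_top_le_of_cheapest [DecidableEq V] {g : ℕ → ℝ} {c : V → ℝ} {k : ℕ}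
    {y : V → Bool} (hy : IsPSNE ⊤ (fun _ => g) c y) (hyk : #(investors y) = k)
    {S : Finset V} (hScard : #S = k)
    (hSmin : ∀ i ∈ S, ∀ j, c j ≤ Δg g (k - 1) → j ∉ S → c i ≤ c j) :
    SW ⊤ (fun _ => g) c y ≤ SW ⊤ (fun _ => g) c (fun i => decide (i ∈ S)) := by
  obtain ⟨hyin, -⟩ := (isPSNE_top_iff g c hyk).1 hy
  rw [SW_top, SW_top, investors_decide_mem, hyk, hScard]
  refine sub_le_sub_left (sum_le_sum_of_card_eq c (hScard.trans hyk.symm) ?_) _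
  intro i hi j hj
  obtain ⟨hiS, -⟩ := mem_sdiff.1 hi
  obtain ⟨hjy, hjS⟩ := mem_sdiff.1 hj
  exact hSmin i hiS j (hyin j hjy) hjS

end CompleteGraph

theorem stmt6_general (n k : ℕ)
    (g : ℕ → ℝ) (c : Fin n → ℝ)
    (hΔ : Δg g k ≤ Δg g (k - 1))
    (hex : ∃ y : Fin n → Bool,
        IsPSNE (⊤ : SimpleGraph (Fin n)) (fun _ => g) c y ∧ {i | y i = true}.ncard = k)
    (S : Finset (Fin n)) (hScard : S.card = k)
    (hSsub : ∀ i ∈ S, c i ≤ Δg g (k - 1))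
    (hSmin : ∀ i ∈ S, ∀ j : Fin n, c j ≤ Δg g (k - 1) → j ∉ S → c i ≤ c j) :
    IsPSNE (⊤ : SimpleGraph (Fin n)) (fun _ => g) c (fun i => decide (i ∈ S)) ∧
    {i : Fin n | (decide (i ∈ S) : Bool) = true}.ncard = k ∧
    (∀ y : Fin n → Bool,
      IsPSNE (⊤ : SimpleGraph (Fin n)) (fun _ => g) c y → {i | y i = true}.ncard = k →
      SW (⊤ : SimpleGraph (Fin n)) (fun _ => g) c y ≤
        SW (⊤ : SimpleGraph (Fin n)) (fun _ => g) c (fun i => decide (i ∈ S))) := by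
  obtain ⟨y₀, hy₀, hy₀k⟩ := hex
  rw [ncard_setOf_eq_card_investors] at hy₀k
  refine ⟨isPSNE_top_of_cheapest hΔ hy₀ hy₀k hScard hSsub hSmin, ?_, fun y hy hyk => ?_⟩
  · rw [ncard_setOf_eq_card_investors, investors_decide_mem, hScard]
  · rw [ncard_setOf_eq_card_investors] at hyk
    exact SW_top_le_of_cheapest hy hyk hScard hSmin

/-- homogeneous BNPG on the complete graph, `0 < k < n`, `Δg(k) ≤ Δg(k−1)`,
and some `k`-PSNE exists.  If `S` consists of `k` players of `I×(k) = {i : c_i ≤ Δg(k−1)}`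
with the `k` smallest costs, then investing exactly on `S` is a `k`-PSNE whose social
welfare is at least that of every `k`-PSNE. -/
theorem stmt6 (n k : ℕ) (hk0 : 0 < k) (hkn : k < n)
    (g : ℕ → ℝ) (hmono : Monotone g) (c : Fin n → ℝ)
    (hΔ : Δg g k ≤ Δg g (k - 1))
    (hex : ∃ y : Fin n → Bool,
        IsPSNE (⊤ : SimpleGraph (Fin n)) (fun _ => g) c y ∧ {i | y i = true}.ncard = k)
    (S : Finset (Fin n)) (hScard : S.card = k)
    (hSsub : ∀ i ∈ S, c i ≤ Δg g (k - 1))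
    (hSmin : ∀ i ∈ S, ∀ j : Fin n, c j ≤ Δg g (k - 1) → j ∉ S → c i ≤ c j) :
    IsPSNE (⊤ : SimpleGraph (Fin n)) (fun _ => g) c (fun i => decide (i ∈ S)) ∧
    {i : Fin n | (decide (i ∈ S) : Bool) = true}.ncard = k ∧
    (∀ y : Fin n → Bool,
      IsPSNE (⊤ : SimpleGraph (Fin n)) (fun _ => g) c y → {i | y i = true}.ncard = k →
      SW (⊤ : SimpleGraph (Fin n)) (fun _ => g) c y ≤
        SW (⊤ : SimpleGraph (Fin n)) (fun _ => g) c (fun i => decide (i ∈ S))) :=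
  stmt6_general n k g c hΔ hex S hScard hSsub hSmin
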